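/- arXiv:1005.3984 — 2 statements merged into one kernel-verified Lean document; each statement's English description precedes it below -/
import Mathlib

section
/- Let T : ℝ → ℝ be differentiable on [0, r] with T t > 0 for all t ∈ [0, r], and set M := J₁ * Real.exp ((E₂ - E₁) / T 0). If for all t ∈ [0, r] the identity J₁ * Real.exp (-E₁ / T t) * Real.exp (-∫ s in (0:ℝ)..t, k₁ * Real.exp (-E₁ / T s)) + J₂ * k₂ * Real.exp (-E₂ / T t) * (∫ τ in (0:ℝ)..t, Real.exp (-E₁ / T τ - (∫ s in τ..t, k₂ * Real.exp (-E₂ / T s)) - ∫ s in (0:ℝ)..τ, k₁ * Real.exp (-E₁ / T s))) = M * Real.exp (-E₂ / T t) * Real.exp (-∫ s in (0:ℝ)..t, k₂ * Real.exp (-E₂ / T s)) holds, then for all t ∈ [0, r]: (J₁ + J₂) * k₂ * Real.exp (-E₂ / T t) - J₁ * k₁ * Real.exp (-E₁ / T t) = (E₂ - E₁) * J₁ * T' t / (T t)^2. (Implication (3.5) ⇒ (3.7) in the strong observability analysis of Application 1.) -/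
/-!
Write `A t = ∫₀ᵗ k₁ exp (-E₁ / T)` and `B t = ∫₀ᵗ k₂ exp (-E₂ / T)`. Dividing (3.5) by
`exp (-E₂ / T t - B t)` turns it into the statement that
`Φ t = J₁ exp ((E₂ - E₁) / T t + B t - A t) + J₂ k₂ ∫₀ᵗ exp (-E₁ / T u + B u - A u) du`
is constant on `[0, r]`. The derivative of `Φ` is `exp ((E₂ - E₁) / T t + B t - A t)` times the
difference of the two sides of (3.7), so (3.7) follows.
-/

open MeasureTheory intervalIntegral Set

theorem ContinuousOn.hasDerivWithinAt_integral_Icc {E : Type*} [NormedAddCommGroup E]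
    [NormedSpace ℝ E] [CompleteSpace E] {f : ℝ → E} {a b t : ℝ}
    (hf : ContinuousOn f (Icc a b)) (ht : t ∈ Icc a b) :
    HasDerivWithinAt (fun u => ∫ x in a..u, f x) (f t) (Icc a b) t := by
  have : Fact (t ∈ Icc a b) := ⟨ht⟩
  exact integral_hasDerivWithinAt_right
    (hf.mono (uIcc_subset_Icc (left_mem_Icc.2 (ht.1.trans ht.2)) ht)).intervalIntegrable
    (hf.stronglyMeasurableAtFilter_nhdsWithin measurableSet_Icc t) (hf t ht)

theorem ContinuousOn.integral_eq_sub_integral_Icc {E : Type*} [NormedAddCommGroup E]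
    [NormedSpace ℝ E] {f : ℝ → E} {a b u t : ℝ}
    (hf : ContinuousOn f (Icc a b)) (hu : u ∈ Icc a b) (ht : t ∈ Icc a b) :
    ∫ x in u..t, f x = (∫ x in a..t, f x) - ∫ x in a..u, f x := by
  have ha : a ∈ Icc a b := left_mem_Icc.2 (hu.1.trans hu.2)
  exact (integral_interval_sub_left (hf.mono (uIcc_subset_Icc ha ht)).intervalIntegrable
    (hf.mono (uIcc_subset_Icc ha hu)).intervalIntegrable).symm

theorem ContinuousOn.rexp_const_div {s : Set ℝ} {T : ℝ → ℝ} (hT : ContinuousOn T s)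
    (hT0 : ∀ x ∈ s, T x ≠ 0) (c : ℝ) : ContinuousOn (fun x => Real.exp (c / T x)) s := by
  fun_prop (disch := assumption)

noncomputable def arrheniusIntegral (k E : ℝ) (T : ℝ → ℝ) (t : ℝ) : ℝ :=
  ∫ s in (0:ℝ)..t, k * Real.exp (-E / T s)

noncomputable def logDecayRatio (k₁ k₂ E₁ E₂ : ℝ) (T : ℝ → ℝ) (t : ℝ) : ℝ :=
  (E₂ - E₁) / T t + arrheniusIntegral k₂ E₂ T t - arrheniusIntegral k₁ E₁ T t

/-- The left-hand side of (3.5) divided by `exp (-E₂ / T t - B t)`,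
where `B = arrheniusIntegral k₂ E₂ T`. -/
noncomputable def scaledOutput (J₁ J₂ k₁ k₂ E₁ E₂ : ℝ) (T : ℝ → ℝ) (t : ℝ) : ℝ :=
  J₁ * Real.exp (logDecayRatio k₁ k₂ E₁ E₂ T t)
    + J₂ * k₂ * ∫ u in (0:ℝ)..t,
        Real.exp (-E₁ / T u + arrheniusIntegral k₂ E₂ T u - arrheniusIntegral k₁ E₁ T u)

section Arrhenius

variable {J₁ J₂ k k₁ k₂ E E₁ E₂ r t : ℝ} {T T' : ℝ → ℝ}

theorem hasDerivWithinAt_arrheniusIntegral (hT : ContinuousOn T (Icc 0 r))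
    (hT0 : ∀ s ∈ Icc 0 r, T s ≠ 0) (ht : t ∈ Icc 0 r) :
    HasDerivWithinAt (arrheniusIntegral k E T) (k * Real.exp (-E / T t)) (Icc 0 r) t :=
  ((hT.rexp_const_div hT0 (-E)).const_smul k).hasDerivWithinAt_integral_Icc ht

theorem continuousOn_arrheniusIntegral (hT : ContinuousOn T (Icc 0 r))
    (hT0 : ∀ s ∈ Icc 0 r, T s ≠ 0) : ContinuousOn (arrheniusIntegral k E T) (Icc 0 r) :=
  fun _ hs => (hasDerivWithinAt_arrheniusIntegral hT hT0 hs).continuousWithinAt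

theorem integral_eq_arrheniusIntegral_sub (hT : ContinuousOn T (Icc 0 r))
    (hT0 : ∀ s ∈ Icc 0 r, T s ≠ 0) {u : ℝ} (hu : u ∈ Icc 0 r) (ht : t ∈ Icc 0 r) :
    ∫ s in u..t, k * Real.exp (-E / T s) = arrheniusIntegral k E T t - arrheniusIntegral k E T u :=
  ((hT.rexp_const_div hT0 (-E)).const_smul k).integral_eq_sub_integral_Icc hu ht

theorem exp_logDecayRatio_mul (hTt : T t ≠ 0) :
    Real.exp (logDecayRatio k₁ k₂ E₁ E₂ T t) * Real.exp (-E₂ / T t)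
      = Real.exp (-E₁ / T t + arrheniusIntegral k₂ E₂ T t - arrheniusIntegral k₁ E₁ T t) := by
  rw [logDecayRatio, ← Real.exp_add]
  congr 1
  field_simp
  ring

theorem scaledOutput_eq_of_identity {M : ℝ} (hT : ContinuousOn T (Icc 0 r))
    (hT0 : ∀ s ∈ Icc 0 r, T s ≠ 0) (ht : t ∈ Icc 0 r)
    (hid : J₁ * Real.exp (-E₁ / T t) * Real.exp (-∫ s in (0:ℝ)..t, k₁ * Real.exp (-E₁ / T s))
        + J₂ * k₂ * Real.exp (-E₂ / T t)
          * (∫ u in (0:ℝ)..t, Real.exp (-E₁ / T u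
              - (∫ s in u..t, k₂ * Real.exp (-E₂ / T s))
              - ∫ s in (0:ℝ)..u, k₁ * Real.exp (-E₁ / T s)))
        = M * Real.exp (-E₂ / T t) * Real.exp (-∫ s in (0:ℝ)..t, k₂ * Real.exp (-E₂ / T s))) :
    scaledOutput J₁ J₂ k₁ k₂ E₁ E₂ T t = M := by
  set A := arrheniusIntegral k₁ E₁ T
  set B := arrheniusIntegral k₂ E₂ T
  have hinner : ∫ u in (0:ℝ)..t, Real.exp (-E₁ / T u
        - (∫ s in u..t, k₂ * Real.exp (-E₂ / T s)) - ∫ s in (0:ℝ)..u, k₁ * Real.exp (-E₁ / T s))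
      = Real.exp (-B t) * ∫ u in (0:ℝ)..t, Real.exp (-E₁ / T u + B u - A u) := by
    rw [← intervalIntegral.integral_const_mul]
    refine integral_congr fun u hu => ?_
    have hu' : u ∈ Icc 0 r := uIcc_subset_Icc (left_mem_Icc.2 (ht.1.trans ht.2)) ht hu
    rw [integral_eq_arrheniusIntegral_sub hT hT0 hu' ht, ← Real.exp_add]
    congr 1
    simp only [A, B, arrheniusIntegral]
    ring
  change J₁ * Real.exp (-E₁ / T t) * Real.exp (-A t) + _ = M * Real.exp (-E₂ / T t)
    * Real.exp (-B t) at hid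
  rw [hinner] at hid
  have hdecay : Real.exp (logDecayRatio k₁ k₂ E₁ E₂ T t) * (Real.exp (-E₂ / T t) * Real.exp (-B t))
      = Real.exp (-E₁ / T t) * Real.exp (-A t) := by
    rw [← mul_assoc, exp_logDecayRatio_mul (hT0 t ht), ← Real.exp_add, ← Real.exp_add]
    congr 1
    simp only [A, B]
    ring
  refine mul_right_cancel₀ (mul_ne_zero (Real.exp_ne_zero (-E₂ / T t)) (Real.exp_ne_zero (-B t))) ?_
  rw [scaledOutput]
  linear_combination hid + J₁ * hdecay

theorem hasDerivWithinAt_logDecayRatio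
    (hT : ∀ s ∈ Icc 0 r, HasDerivWithinAt T (T' s) (Icc 0 r) s)
    (hT0 : ∀ s ∈ Icc 0 r, T s ≠ 0) (ht : t ∈ Icc 0 r) :
    HasDerivWithinAt (logDecayRatio k₁ k₂ E₁ E₂ T)
      (-(E₂ - E₁) * T' t / T t ^ 2 + k₂ * Real.exp (-E₂ / T t) - k₁ * Real.exp (-E₁ / T t))
      (Icc 0 r) t := by
  have hTc : ContinuousOn T (Icc 0 r) := fun s hs => (hT s hs).continuousWithinAt
  refine ((((hasDerivWithinAt_const t _ (E₂ - E₁)).div (hT t ht) (hT0 t ht)).add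
    (hasDerivWithinAt_arrheniusIntegral (k := k₂) (E := E₂) hTc hT0 ht)).sub
    (hasDerivWithinAt_arrheniusIntegral (k := k₁) (E := E₁) hTc hT0 ht)).congr_deriv ?_
  ring

theorem hasDerivWithinAt_scaledOutput
    (hT : ∀ s ∈ Icc 0 r, HasDerivWithinAt T (T' s) (Icc 0 r) s)
    (hT0 : ∀ s ∈ Icc 0 r, T s ≠ 0) (ht : t ∈ Icc 0 r) :
    HasDerivWithinAt (scaledOutput J₁ J₂ k₁ k₂ E₁ E₂ T)
      (Real.exp (logDecayRatio k₁ k₂ E₁ E₂ T t)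
        * (J₁ * (-(E₂ - E₁) * T' t / T t ^ 2 + k₂ * Real.exp (-E₂ / T t)
            - k₁ * Real.exp (-E₁ / T t)) + J₂ * k₂ * Real.exp (-E₂ / T t)))
      (Icc 0 r) t := by
  have hTc : ContinuousOn T (Icc 0 r) := fun s hs => (hT s hs).continuousWithinAt
  have hintegrand : ContinuousOn (fun u => Real.exp (-E₁ / T u + arrheniusIntegral k₂ E₂ T u
      - arrheniusIntegral k₁ E₁ T u)) (Icc 0 r) :=
    (((continuousOn_const.div hTc hT0).add (continuousOn_arrheniusIntegral hTc hT0)).sub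
      (continuousOn_arrheniusIntegral hTc hT0)).rexp
  refine (((hasDerivWithinAt_logDecayRatio (k₁ := k₁) (k₂ := k₂) hT hT0 ht).exp.const_mul J₁).add
    ((hintegrand.hasDerivWithinAt_integral_Icc ht).const_mul (J₂ * k₂))).congr_deriv ?_
  rw [← exp_logDecayRatio_mul (hT0 t ht)]
  ring

end Arrhenius

theorem stmt_15_general (J₁ J₂ k₁ k₂ E₁ E₂ r : ℝ)
    (hr : 0 < r)
    (T T' : ℝ → ℝ)
    (hT : ∀ t ∈ Set.Icc (0:ℝ) r, HasDerivWithinAt T (T' t) (Set.Icc 0 r) t)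
    (hTpos : ∀ t ∈ Set.Icc (0:ℝ) r, 0 < T t)
    (M : ℝ)
    (hid : ∀ t ∈ Set.Icc (0:ℝ) r,
      J₁ * Real.exp (-E₁ / T t)
          * Real.exp (-∫ s in (0:ℝ)..t, k₁ * Real.exp (-E₁ / T s))
        + J₂ * k₂ * Real.exp (-E₂ / T t)
          * (∫ u in (0:ℝ)..t, Real.exp (-E₁ / T u
              - (∫ s in u..t, k₂ * Real.exp (-E₂ / T s))
              - ∫ s in (0:ℝ)..u, k₁ * Real.exp (-E₁ / T s)))
        = M * Real.exp (-E₂ / T t)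
          * Real.exp (-∫ s in (0:ℝ)..t, k₂ * Real.exp (-E₂ / T s))) :
    ∀ t ∈ Set.Icc (0:ℝ) r,
      (J₁ + J₂) * k₂ * Real.exp (-E₂ / T t) - J₁ * k₁ * Real.exp (-E₁ / T t)
        = (E₂ - E₁) * J₁ * T' t / (T t) ^ 2 := by
  intro t ht
  have hT0 : ∀ s ∈ Icc 0 r, T s ≠ 0 := fun s hs => (hTpos s hs).ne'
  have hconst : ∀ s ∈ Icc 0 r, scaledOutput J₁ J₂ k₁ k₂ E₁ E₂ T s = M := fun s hs =>
    scaledOutput_eq_of_identity (fun s hs => (hT s hs).continuousWithinAt) hT0 hs (hid s hs)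
  have hderiv := (uniqueDiffOn_Icc hr t ht).eq_deriv _ (hasDerivWithinAt_scaledOutput hT hT0 ht)
    ((hasDerivWithinAt_const t _ M).congr hconst (hconst t ht))
  have hfactor := (mul_eq_zero.1 hderiv).resolve_left (Real.exp_ne_zero _)
  field_simp [hT0 t ht] at hfactor ⊢
  linear_combination hfactor

/-- Implication (3.5) ⇒ (3.7) in the strong observability analysis of
Application 1: if the indistinguishability identity (3.5) holds on `[0, r]`
with `M = J₁ * exp ((E₂ - E₁) / T 0)`, then identity (3.7) holds on `[0, r]`. -/
theorem stmt_15 (J₁ J₂ k₁ k₂ E₁ E₂ r : ℝ)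
    (hJ₁ : 0 < J₁) (hJ₂ : 0 < J₂) (hk₁ : 0 < k₁) (hk₂ : 0 < k₂)
    (hE₁ : 0 < E₁) (hE₂ : 0 < E₂) (hr : 0 < r)
    (T T' : ℝ → ℝ)
    (hT : ∀ t ∈ Set.Icc (0:ℝ) r, HasDerivWithinAt T (T' t) (Set.Icc 0 r) t)
    (hTpos : ∀ t ∈ Set.Icc (0:ℝ) r, 0 < T t)
    (M : ℝ) (hM : M = J₁ * Real.exp ((E₂ - E₁) / T 0))
    (hid : ∀ t ∈ Set.Icc (0:ℝ) r,
      J₁ * Real.exp (-E₁ / T t)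
          * Real.exp (-∫ s in (0:ℝ)..t, k₁ * Real.exp (-E₁ / T s))
        + J₂ * k₂ * Real.exp (-E₂ / T t)
          * (∫ u in (0:ℝ)..t, Real.exp (-E₁ / T u
              - (∫ s in u..t, k₂ * Real.exp (-E₂ / T s))
              - ∫ s in (0:ℝ)..u, k₁ * Real.exp (-E₁ / T s)))
        = M * Real.exp (-E₂ / T t)
          * Real.exp (-∫ s in (0:ℝ)..t, k₂ * Real.exp (-E₂ / T s))) :
    ∀ t ∈ Set.Icc (0:ℝ) r,
      (J₁ + J₂) * k₂ * Real.exp (-E₂ / T t) - J₁ * k₁ * Real.exp (-E₁ / T t)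
        = (E₂ - E₁) * J₁ * T' t / (T t) ^ 2 :=
  stmt_15_general J₁ J₂ k₁ k₂ E₁ E₂ r hr T T' hT hTpos M hid
end

section
/- Suppose ζ ∈ ℝⁿ, ζ ≠ 0, and (q t)ᵀ *ᵥ ζ = 0 for all t ∈ [0, r]. Then there exists λ > 0 such that, with x₁ := x₀ + λ • ζ ≠ x₀, the function x̃ t := Φ t *ᵥ x₁ + θ t satisfies: x̃ 0 = x₁, x̃' t = A t *ᵥ x̃ t + b t for all t ∈ [0, r], y' t = f t + (C t)ᵀ *ᵥ x̃ t for all t ∈ [0, r], and (x̃ t, y t) ∈ O for all t ∈ [0, r]. In other words, the initial state x₁ ≠ x₀ produces exactly the same output y on [0, r] while remaining in O, so the input does not strongly distinguish (x₀, y 0). (Construction in the proof of implication (b) ⇒ (c) of Proposition 2.3, showing failure of condition (d) yields indistinguishable states.) -/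
/-!
Both `x` and `t ↦ Φ t *ᵥ x₀ + θ t` solve the same linear ODE with initial value `x₀`, so they
coincide by Grönwall uniqueness, and therefore `x̃ = x + λ • Φ ζ`. Differentiating
`(q t)ᵀ *ᵥ ζ = 0` gives `(C t)ᵀ *ᵥ (Φ t *ᵥ ζ) = 0` on `[0, r]`, so `x̃` produces the same
output as `x`. Finally the trajectory `t ↦ (x t, y t)` is a compact subset of the open set `O`,
so it has a uniform neighbourhood inside `O`, and small `λ` keeps `(x̃ t, y t)` in it.
-/

open MeasureTheory intervalIntegral Matrix Set

attribute [local instance] Matrix.normedAddCommGroup Matrix.normedSpace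

namespace Matrix

variable {m n : Type*} [Fintype m] [Fintype n]

noncomputable def mulVecCLM (v : n → ℝ) : Matrix m n ℝ →L[ℝ] m → ℝ :=
  LinearMap.toContinuousLinearMap
    { toFun := (· *ᵥ v)
      map_add' := fun M N => add_mulVec M N v
      map_smul' := fun c M => smul_mulVec c M v }

@[simp]
lemma mulVecCLM_apply (v : n → ℝ) (M : Matrix m n ℝ) : mulVecCLM v M = M *ᵥ v := rfl

noncomputable def vecMulCLM (v : m → ℝ) : Matrix m n ℝ →L[ℝ] n → ℝ :=
  LinearMap.toContinuousLinearMap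
    { toFun := (v ᵥ* ·)
      map_add' := fun M N => vecMul_add M N v
      map_smul' := fun c M => vecMul_smul v c M }

@[simp]
lemma vecMulCLM_apply (v : m → ℝ) (M : Matrix m n ℝ) : vecMulCLM v M = v ᵥ* M := rfl

-- `‖A‖` is the entrywise sup norm.
theorem norm_mulVec_le_card_mul (A : Matrix m n ℝ) (w : n → ℝ) :
    ‖A *ᵥ w‖ ≤ Fintype.card n * ‖A‖ * ‖w‖ := by
  refine (pi_norm_le_iff_of_nonneg (by positivity)).2 fun i => ?_
  calc ‖(A *ᵥ w) i‖ ≤ ∑ j, ‖A i j * w j‖ := norm_sum_le _ _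
    _ ≤ ∑ _j : n, ‖A‖ * ‖w‖ := Finset.sum_le_sum fun j _ => by
        rw [norm_mul]
        exact mul_le_mul (norm_entry_le_entrywise_sup_norm A) (norm_le_pi_norm w j)
          (norm_nonneg _) (norm_nonneg _)
    _ = Fintype.card n * ‖A‖ * ‖w‖ := by simp [mul_assoc]

theorem lipschitzWith_mulVec_add {A : Matrix m n ℝ} {K : NNReal}
    (hA : Fintype.card n * ‖A‖ ≤ K) (c : m → ℝ) : LipschitzWith K (fun z => A *ᵥ z + c) := by
  refine LipschitzWith.of_dist_le_mul fun z w => ?_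
  rw [dist_eq_norm, dist_eq_norm, add_sub_add_right_eq_sub, ← mulVec_sub]
  exact (norm_mulVec_le_card_mul A _).trans (by gcongr)

theorem intervalIntegral_vecMul {M : ℝ → Matrix m n ℝ} {a b : ℝ}
    (hM : ContinuousOn M (uIcc a b)) (v : m → ℝ) :
    ∫ s in a..b, v ᵥ* M s = v ᵥ* ∫ s in a..b, M s :=
  (vecMulCLM v).intervalIntegral_comp_comm hM.intervalIntegrable

end Matrix

section Derivatives

variable {m n : Type*} [Fintype m] [Fintype n] {s : Set ℝ} {t : ℝ}

theorem HasDerivWithinAt.matrix_mulVec_const {M : ℝ → Matrix m n ℝ} {M' : Matrix m n ℝ}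
    (hM : HasDerivWithinAt M M' s t) (v : n → ℝ) :
    HasDerivWithinAt (fun s => M s *ᵥ v) (M' *ᵥ v) s t :=
  -- elaborated before unifying: the normed and the plain `Pi` instances agree only up to unfolding
  ((mulVecCLM v).hasFDerivAt.comp_hasDerivWithinAt t hM :)

theorem HasDerivWithinAt.mulVec_add_of_fundamentalMatrix {A : Matrix n n ℝ} {b : n → ℝ}
    {Φ : ℝ → Matrix n n ℝ} {θ : ℝ → n → ℝ}
    (hΦ : HasDerivWithinAt Φ (A * Φ t) s t) (hθ : HasDerivWithinAt θ (A *ᵥ θ t + b) s t)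
    (c : n → ℝ) :
    HasDerivWithinAt (fun s => Φ s *ᵥ c + θ s) (A *ᵥ (Φ t *ᵥ c + θ t) + b) s t := by
  refine ((hΦ.matrix_mulVec_const c).add hθ).congr_deriv ?_
  rw [mulVec_add, mulVec_mulVec, add_assoc]

end Derivatives

theorem linear_ODE_solution_unique_of_mem_Icc {n : Type*} [Fintype n]
    {A : ℝ → Matrix n n ℝ} {b : ℝ → n → ℝ} {u v : ℝ → n → ℝ} {a c : ℝ}
    (hA : ContinuousOn A (Icc a c))
    (hu : ∀ t ∈ Icc a c, HasDerivWithinAt u (A t *ᵥ u t + b t) (Icc a c) t)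
    (hv : ∀ t ∈ Icc a c, HasDerivWithinAt v (A t *ᵥ v t + b t) (Icc a c) t)
    (h₀ : u a = v a) : EqOn u v (Icc a c) := by
  obtain ⟨M, hM⟩ := isCompact_Icc.exists_bound_of_continuousOn hA
  have hlip : ∀ t ∈ Ico a c, LipschitzOnWith (Real.toNNReal (Fintype.card n * M))
      (fun z => A t *ᵥ z + b t) univ := by
    intro t ht
    have hAt : Fintype.card n * ‖A t‖ ≤ Fintype.card n * M := by
      gcongr; exact hM t (Ico_subset_Icc_self ht)
    exact (lipschitzWith_mulVec_add (hAt.trans (Real.le_coe_toNNReal _)) _).lipschitzOnWith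
  have hright : ∀ w : ℝ → n → ℝ, (∀ t ∈ Icc a c,
      HasDerivWithinAt w (A t *ᵥ w t + b t) (Icc a c) t) →
      ∀ t ∈ Ico a c, HasDerivWithinAt w (A t *ᵥ w t + b t) (Ici t) t := fun w hw t ht =>
    (hw t (Ico_subset_Icc_self ht)).mono_of_mem_nhdsWithin (Icc_mem_nhdsGE_of_mem ht)
  exact ODE_solution_unique_of_mem_Icc_right hlip
    (fun t ht => (hu t ht).continuousWithinAt) (hright u hu) (fun _ _ => trivial)
    (fun t ht => (hv t ht).continuousWithinAt) (hright v hv) (fun _ _ => trivial) h₀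

theorem ContinuousOn.eqOn_zero_of_forall_intervalIntegral_eq_zero {E : Type*}
    [NormedAddCommGroup E] [NormedSpace ℝ E] [CompleteSpace E] {f : ℝ → E} {a b : ℝ}
    (hab : a < b) (hf : ContinuousOn f (Icc a b))
    (h : ∀ t ∈ Icc a b, ∫ s in a..t, f s = 0) : EqOn f 0 (Icc a b) := by
  intro t ht
  have : Fact (t ∈ Icc a b) := ⟨ht⟩
  have hsub : uIcc a t ⊆ Icc a b := by
    rw [uIcc_of_le ht.1]; exact Icc_subset_Icc le_rfl ht.2
  have hderiv : HasDerivWithinAt (fun u => ∫ s in a..u, f s) (f t) (Icc a b) t :=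
    integral_hasDerivWithinAt_right ((hf.mono hsub).intervalIntegrable)
      (hf.stronglyMeasurableAtFilter_nhdsWithin measurableSet_Icc t) (hf t ht)
  have hzero : HasDerivWithinAt (fun u => ∫ s in a..u, f s) 0 (Icc a b) t :=
    (hasDerivWithinAt_const t _ 0).congr_of_mem h ht
  exact (uniqueDiffOn_Icc hab t ht).eq_deriv _ hderiv hzero

theorem IsCompact.exists_pos_forall_add_smul_mem {E : Type*} [NormedAddCommGroup E]
    [NormedSpace ℝ E] {K U D : Set E} (hK : IsCompact K) (hU : IsOpen U) (hKU : K ⊆ U)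
    (hD : Bornology.IsBounded D) : ∃ lam > (0 : ℝ), ∀ p ∈ K, ∀ d ∈ D, p + lam • d ∈ U := by
  obtain ⟨ε, hε, hthick⟩ := hK.exists_thickening_subset_open hU hKU
  obtain ⟨R, hR, hDR⟩ := hD.exists_pos_norm_lt
  refine ⟨ε / R, div_pos hε hR, fun p hp d hd => hthick (Metric.ball_subset_thickening hp ε ?_)⟩
  rw [mem_ball_iff_norm, add_sub_cancel_left, norm_smul, Real.norm_of_nonneg (by positivity)]
  calc ε / R * ‖d‖ < ε / R * R := by gcongr; exact hDR d hd
    _ = ε := div_mul_cancel₀ ε hR.ne'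

theorem stmt_18_general (n k : ℕ) (r : ℝ) (hr : 0 < r)
    (O : Set ((Fin n → ℝ) × (Fin k → ℝ))) (hO : IsOpen O)
    (A : ℝ → Matrix (Fin n) (Fin n) ℝ) (b : ℝ → (Fin n → ℝ))
    (C : ℝ → Matrix (Fin n) (Fin k) ℝ) (f : ℝ → (Fin k → ℝ))
    (hA : ContinuousOn A (Set.Icc 0 r))
    (hC : ContinuousOn C (Set.Icc 0 r))
    (x : ℝ → (Fin n → ℝ)) (y : ℝ → (Fin k → ℝ)) (x₀ : Fin n → ℝ)
    (hx : ∀ t ∈ Set.Icc (0:ℝ) r,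
      HasDerivWithinAt x (A t *ᵥ x t + b t) (Set.Icc 0 r) t)
    (hy : ∀ t ∈ Set.Icc (0:ℝ) r,
      HasDerivWithinAt y (f t + (C t)ᵀ *ᵥ x t) (Set.Icc 0 r) t)
    (hx0 : x 0 = x₀)
    (hinO : ∀ t ∈ Set.Icc (0:ℝ) r, (x t, y t) ∈ O)
    (Φ : ℝ → Matrix (Fin n) (Fin n) ℝ)
    (hΦ : ∀ t ∈ Set.Icc (0:ℝ) r, HasDerivWithinAt Φ (A t * Φ t) (Set.Icc 0 r) t)
    (hΦ0 : Φ 0 = 1)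
    (θ : ℝ → (Fin n → ℝ))
    (hθ : ∀ t ∈ Set.Icc (0:ℝ) r,
      HasDerivWithinAt θ (A t *ᵥ θ t + b t) (Set.Icc 0 r) t)
    (hθ0 : θ 0 = 0)
    (q : ℝ → Matrix (Fin n) (Fin k) ℝ)
    (hqdef : ∀ t, q t = ∫ s in (0:ℝ)..t, (Φ s)ᵀ * C s)
    (ζ : Fin n → ℝ) (hζ : ζ ≠ 0)
    (hker : ∀ t ∈ Set.Icc (0:ℝ) r, (q t)ᵀ *ᵥ ζ = 0) :
    ∃ lam : ℝ, 0 < lam ∧ x₀ + lam • ζ ≠ x₀ ∧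
      Φ 0 *ᵥ (x₀ + lam • ζ) + θ 0 = x₀ + lam • ζ ∧
      ∀ t ∈ Set.Icc (0:ℝ) r,
        HasDerivWithinAt (fun s => Φ s *ᵥ (x₀ + lam • ζ) + θ s)
          (A t *ᵥ (Φ t *ᵥ (x₀ + lam • ζ) + θ t) + b t) (Set.Icc 0 r) t ∧
        HasDerivWithinAt y (f t + (C t)ᵀ *ᵥ (Φ t *ᵥ (x₀ + lam • ζ) + θ t))
          (Set.Icc 0 r) t ∧
        (Φ t *ᵥ (x₀ + lam • ζ) + θ t, y t) ∈ O := by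
  have hsol (c : Fin n → ℝ) (t) (ht : t ∈ Icc 0 r) :=
    (hΦ t ht).mulVec_add_of_fundamentalMatrix (hθ t ht) c
  have hΦc : ContinuousOn Φ (Icc 0 r) := fun t ht => (hΦ t ht).continuousWithinAt
  have hxΦθ : EqOn x (fun t => Φ t *ᵥ x₀ + θ t) (Icc 0 r) :=
    linear_ODE_solution_unique_of_mem_Icc hA hx (hsol x₀) (by simp [hx0, hΦ0, hθ0])
  have hCΦζ : ∀ t ∈ Icc 0 r, (C t)ᵀ *ᵥ (Φ t *ᵥ ζ) = 0 := by
    have hcont : ContinuousOn (fun t => (Φ t *ᵥ ζ) ᵥ* C t) (Icc 0 r) := by fun_prop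
    refine fun t ht => (mulVec_transpose _ _).trans
      (hcont.eqOn_zero_of_forall_intervalIntegral_eq_zero hr (fun t ht => ?_) ht)
    have hsub : uIcc 0 t ⊆ Icc 0 r := by
      rw [uIcc_of_le ht.1]; exact Icc_subset_Icc le_rfl ht.2
    have hΦCc : ContinuousOn (fun s => (Φ s)ᵀ * C s) (uIcc 0 t) :=
      (continuous_fst.matrix_transpose.matrix_mul continuous_snd).comp_continuousOn
        ((hΦc.prodMk hC).mono hsub)
    rw [← hker t ht, hqdef, mulVec_transpose, ← intervalIntegral_vecMul hΦCc]
    simp only [← vecMul_vecMul, vecMul_transpose]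
  have hxyc : ContinuousOn (fun t => (x t, y t)) (Icc 0 r) := fun t ht =>
    (hx t ht).continuousWithinAt.prodMk (hy t ht).continuousWithinAt
  obtain ⟨lam, hlam, hmem⟩ :=
    (isCompact_Icc.image_of_continuousOn hxyc).exists_pos_forall_add_smul_mem hO
      (image_subset_iff.2 hinO)
      (isCompact_Icc.image_of_continuousOn (f := fun t => (Φ t *ᵥ ζ, (0 : Fin k → ℝ)))
        (by fun_prop)).isBounded
  have hshift : ∀ t ∈ Icc 0 r, Φ t *ᵥ (x₀ + lam • ζ) + θ t = x t + lam • (Φ t *ᵥ ζ) := by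
    intro t ht
    rw [hxΦθ ht, mulVec_add, mulVec_smul, add_right_comm]
  refine ⟨lam, hlam, by simpa using smul_ne_zero hlam.ne' hζ, by simp [hΦ0, hθ0],
    fun t ht => ⟨hsol _ t ht, ?_, ?_⟩⟩
  · rw [hshift t ht, mulVec_add, mulVec_smul, hCΦζ t ht, smul_zero, add_zero]
    exact hy t ht
  · simpa [hshift t ht] using hmem _ (mem_image_of_mem _ ht) _ (mem_image_of_mem _ ht)

/-- Construction in the proof of implication (b) ⇒ (c) of Proposition 2.3:
if `ζ ≠ 0` lies in the common kernel of the matrices `(q t)ᵀ`, then for some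
`λ > 0` the initial state `x₁ = x₀ + λ • ζ ≠ x₀` generates, via
`x̃ t = Φ t *ᵥ x₁ + θ t`, a solution of the same system producing exactly the
same output `y` on `[0, r]` while remaining in the open set `O`. -/
theorem stmt_18 (n k : ℕ) (hn : 1 ≤ n) (hk : 1 ≤ k) (r : ℝ) (hr : 0 < r)
    (O : Set ((Fin n → ℝ) × (Fin k → ℝ))) (hO : IsOpen O)
    (A : ℝ → Matrix (Fin n) (Fin n) ℝ) (b : ℝ → (Fin n → ℝ))
    (C : ℝ → Matrix (Fin n) (Fin k) ℝ) (f : ℝ → (Fin k → ℝ))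
    (hA : ContinuousOn A (Set.Icc 0 r)) (hb : ContinuousOn b (Set.Icc 0 r))
    (hC : ContinuousOn C (Set.Icc 0 r)) (hf : ContinuousOn f (Set.Icc 0 r))
    (x : ℝ → (Fin n → ℝ)) (y : ℝ → (Fin k → ℝ)) (x₀ : Fin n → ℝ)
    (hx : ∀ t ∈ Set.Icc (0:ℝ) r,
      HasDerivWithinAt x (A t *ᵥ x t + b t) (Set.Icc 0 r) t)
    (hy : ∀ t ∈ Set.Icc (0:ℝ) r,
      HasDerivWithinAt y (f t + (C t)ᵀ *ᵥ x t) (Set.Icc 0 r) t)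
    (hx0 : x 0 = x₀)
    (hinO : ∀ t ∈ Set.Icc (0:ℝ) r, (x t, y t) ∈ O)
    (Φ : ℝ → Matrix (Fin n) (Fin n) ℝ)
    (hΦ : ∀ t ∈ Set.Icc (0:ℝ) r, HasDerivWithinAt Φ (A t * Φ t) (Set.Icc 0 r) t)
    (hΦ0 : Φ 0 = 1)
    (θ : ℝ → (Fin n → ℝ))
    (hθ : ∀ t ∈ Set.Icc (0:ℝ) r,
      HasDerivWithinAt θ (A t *ᵥ θ t + b t) (Set.Icc 0 r) t)
    (hθ0 : θ 0 = 0)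
    (q : ℝ → Matrix (Fin n) (Fin k) ℝ)
    (hqdef : ∀ t, q t = ∫ s in (0:ℝ)..t, (Φ s)ᵀ * C s)
    (ζ : Fin n → ℝ) (hζ : ζ ≠ 0)
    (hker : ∀ t ∈ Set.Icc (0:ℝ) r, (q t)ᵀ *ᵥ ζ = 0) :
    ∃ lam : ℝ, 0 < lam ∧ x₀ + lam • ζ ≠ x₀ ∧
      Φ 0 *ᵥ (x₀ + lam • ζ) + θ 0 = x₀ + lam • ζ ∧
      ∀ t ∈ Set.Icc (0:ℝ) r,
        HasDerivWithinAt (fun s => Φ s *ᵥ (x₀ + lam • ζ) + θ s)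
          (A t *ᵥ (Φ t *ᵥ (x₀ + lam • ζ) + θ t) + b t) (Set.Icc 0 r) t ∧
        HasDerivWithinAt y (f t + (C t)ᵀ *ᵥ (Φ t *ᵥ (x₀ + lam • ζ) + θ t))
          (Set.Icc 0 r) t ∧
        (Φ t *ᵥ (x₀ + lam • ζ) + θ t, y t) ∈ O :=
  stmt_18_general n k r hr O hO A b C f hA hC x y x₀ hx hy hx0 hinO Φ hΦ hΦ0 θ hθ hθ0 q hqdef ζ hζ
    hker
end
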